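/- For α = 2 and r = 21/10 the strict inequality 2(α/r)·₃F₂(α, α+1, 3/2; 2, 2; 4/r²) > ₃F₂(α, α, 1/2; 1, 1; 4/r²) + (α²/r²)·₃F₂(α+1, α+1, 3/2; 2, 3; 4/r²) holds; explicitly, (40/21)·₃F₂(2, 3, 3/2; 2, 2; 400/441) > ₃F₂(2, 2, 1/2; 1, 1; 400/441) + (400/441)·₃F₂(3, 3, 3/2; 2, 3; 400/441). -/

import Mathlib

set_option maxRecDepth 8000

open scoped BigOperators

/-- The (rising) Pochhammer symbol `(a)_n` for a real number `a`. -/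
noncomputable def poch (a : ℝ) (n : ℕ) : ℝ := (ascPochhammer ℝ n).eval a

/-- The generalized hypergeometric series `₃F₂(a₁,a₂,a₃; b₁,b₂; x)`. -/
noncomputable def F32 (a₁ a₂ a₃ b₁ b₂ x : ℝ) : ℝ :=
  ∑' n : ℕ, (poch a₁ n * poch a₂ n * poch a₃ n) /
      (poch b₁ n * poch b₂ n * (n.factorial : ℝ)) * x ^ n

/- ### Auxiliary lemmas -/

lemma poch_zero' (a : ℝ) : poch a 0 = 1 := by simp [poch]

lemma poch_succ' (a : ℝ) (n : ℕ) : poch a (n + 1) = poch a n * (a + n) :=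
  ascPochhammer_succ_eval n a

lemma poch_half_pos (n : ℕ) : 0 < poch (1/2) n := ascPochhammer_pos n _ (by norm_num)

lemma poch_half_le (n : ℕ) : poch (1/2) n ≤ (n.factorial : ℝ) := by
  induction n with
  | zero => simp [poch_zero']
  | succ n ih =>
      rw [poch_succ', Nat.factorial_succ]
      push_cast
      have h1 := poch_half_pos n
      nlinarith [(Nat.cast_pos (α := ℝ)).mpr (Nat.factorial_pos n)]

lemma poch_one' (n : ℕ) : poch 1 n = (n.factorial : ℝ) := by
  simp [poch]

lemma poch_two' (n : ℕ) : poch 2 n = ((n:ℝ) + 1) * n.factorial := by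
  induction n with
  | zero => simp [poch_zero']
  | succ n ih => rw [poch_succ', ih, Nat.factorial_succ]; push_cast; ring

lemma poch_three' (n : ℕ) : poch 3 n = ((n:ℝ) + 2) * ((n:ℝ) + 1) * n.factorial / 2 := by
  induction n with
  | zero => simp [poch_zero']
  | succ n ih => rw [poch_succ', ih, Nat.factorial_succ]; push_cast; ring

lemma poch_threehalf' (n : ℕ) : poch (3/2) n = (2*(n:ℝ) + 1) * poch (1/2) n := by
  induction n with
  | zero => simp [poch_zero']
  | succ n ih => rw [poch_succ', ih, poch_succ']; push_cast; ring

/-- term of the first series -/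
noncomputable def fA (n : ℕ) : ℝ :=
  (poch 2 n * poch 3 n * poch (3/2) n) /
      (poch 2 n * poch 2 n * (n.factorial : ℝ)) * (400/441) ^ n

/-- term of the second series -/
noncomputable def fB (n : ℕ) : ℝ :=
  (poch 2 n * poch 2 n * poch (1/2) n) /
      (poch 1 n * poch 1 n * (n.factorial : ℝ)) * (400/441) ^ n

/-- term of the third series -/
noncomputable def fC (n : ℕ) : ℝ :=
  (poch 3 n * poch 3 n * poch (3/2) n) /
      (poch 2 n * poch 3 n * (n.factorial : ℝ)) * (400/441) ^ n

noncomputable def dd (n : ℕ) : ℝ := 440/441 * fA n - fB n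

lemma fact_pos (n : ℕ) : (0:ℝ) < n.factorial :=
  (Nat.cast_pos (α := ℝ)).mpr (Nat.factorial_pos n)

lemma hfA (n : ℕ) :
    fA n = ((n:ℝ)+2) * (2*(n:ℝ)+1) / 2 * (poch (1/2) n / n.factorial) * (400/441) ^ n := by
  have h0 := fact_pos n
  have h1 : ((n:ℝ) + 1) ≠ 0 := by positivity
  rw [fA, poch_two', poch_three', poch_threehalf']
  field_simp

lemma hfB (n : ℕ) :
    fB n = ((n:ℝ)+1)^2 * (poch (1/2) n / n.factorial) * (400/441) ^ n := by
  have h0 := fact_pos n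
  rw [fB, poch_two', poch_one']
  field_simp

lemma hfC (n : ℕ) : fC n = fA n := by
  have h0 := fact_pos n
  have h1 : ((n:ℝ) + 1) ≠ 0 := by positivity
  have h2 : ((n:ℝ) + 2) ≠ 0 := by positivity
  rw [fC, fA, poch_two', poch_three']
  field_simp

lemma hdd (n : ℕ) :
    dd n = (218*(n:ℝ) - (n:ℝ)^2 - 1) / 441 * (poch (1/2) n / n.factorial) * (400/441) ^ n := by
  rw [dd, hfA, hfB]; ring

lemma ratio_le_one (n : ℕ) : poch (1/2) n / n.factorial ≤ 1 := by
  rw [div_le_one (fact_pos n)]; exact poch_half_le n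

lemma ratio_pos (n : ℕ) : 0 < poch (1/2) n / n.factorial :=
  div_pos (poch_half_pos n) (fact_pos n)

lemma summable_cube : Summable (fun n : ℕ => ((n:ℝ)+1)^3 * (400/441) ^ n) := by
  have hx : ‖(400/441 : ℝ)‖ < 1 := by
    rw [Real.norm_eq_abs, abs_lt]; constructor <;> norm_num
  have h := summable_pow_mul_geometric_of_norm_lt_one 3 hx (R := ℝ)
  have h2 := (summable_nat_add_iff 1).mpr h
  have h3 := h2.div_const (400/441)
  refine h3.congr fun n => ?_
  push_cast
  rw [pow_succ]
  field_simp
  ring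

lemma summable_fA : Summable fA := by
  refine Summable.of_nonneg_of_le (fun n => ?_) (fun n => ?_) summable_cube
  · rw [hfA]
    have h := (ratio_pos n).le
    have h2 : (0:ℝ) ≤ ((n:ℝ)+2) * (2*(n:ℝ)+1) / 2 := by positivity
    positivity
  · rw [hfA]
    have hA0 : (0:ℝ) ≤ ((n:ℝ)+2) * (2*(n:ℝ)+1) / 2 := by positivity
    have h3 := mul_le_of_le_one_right hA0 (ratio_le_one n)
    have h1 : ((n:ℝ)+2) * (2*(n:ℝ)+1) / 2 * (poch (1/2) n / n.factorial)
        ≤ ((n:ℝ)+1)^3 := by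
      nlinarith [Nat.cast_nonneg (α := ℝ) n,
        mul_nonneg (mul_nonneg (Nat.cast_nonneg (α := ℝ) n) (Nat.cast_nonneg (α := ℝ) n))
          (Nat.cast_nonneg (α := ℝ) n)]
    exact mul_le_mul_of_nonneg_right h1 (by positivity)

lemma summable_fB : Summable fB := by
  refine Summable.of_nonneg_of_le (fun n => ?_) (fun n => ?_) summable_cube
  · rw [hfB]
    have h := (ratio_pos n).le
    positivity
  · rw [hfB]
    have hA0 : (0:ℝ) ≤ ((n:ℝ)+1)^2 := by positivity
    have h3 := mul_le_of_le_one_right hA0 (ratio_le_one n)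
    have h1 : ((n:ℝ)+1)^2 * (poch (1/2) n / n.factorial) ≤ ((n:ℝ)+1)^3 := by
      nlinarith [Nat.cast_nonneg (α := ℝ) n,
        mul_nonneg (mul_nonneg (Nat.cast_nonneg (α := ℝ) n) (Nat.cast_nonneg (α := ℝ) n))
          (Nat.cast_nonneg (α := ℝ) n)]
    exact mul_le_mul_of_nonneg_right h1 (by positivity)

lemma summable_dd : Summable dd := (summable_fA.mul_left _).sub summable_fB

lemma growth (n : ℕ) (hn : 218 ≤ n) : ((n:ℝ))^2 ≤ (1323/1250) ^ n := by
  induction n, hn using Nat.le_induction with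
  | base =>
      rw [show ((218:ℕ):ℝ) = 218 by norm_num, div_pow,
        le_div_iff₀ (by positivity)]
      norm_num
  | succ n hn ih =>
      have hn' : (218:ℝ) ≤ (n:ℝ) := by exact_mod_cast hn
      have hz : (0:ℝ) < (1323/1250)^n := by positivity
      have key : ((n:ℝ)+1)^2 * 1250 ≤ 1323 * (n:ℝ)^2 := by nlinarith
      have h4 : (1323/1250:ℝ) * (n:ℝ)^2 ≤ (1323/1250) * (1323/1250)^n := by nlinarith
      rw [pow_succ (1323/1250 : ℝ) n]
      push_cast
      nlinarith [h4, key]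

lemma tail_term (n : ℕ) (hn : 218 ≤ n) : ((n:ℝ))^2 * (400/441)^n ≤ (24/25)^n := by
  have h := growth n hn
  have hx : (0:ℝ) ≤ (400/441:ℝ)^n := by positivity
  calc ((n:ℝ))^2 * (400/441)^n ≤ (1323/1250)^n * (400/441)^n := by nlinarith
    _ = (24/25)^n := by rw [← mul_pow]; norm_num

lemma dd_tail_bound (n : ℕ) : -(1/441 * (24/25:ℝ)^(n+2)) ≤ dd (n+2) := by
  set m : ℕ := n + 2 with hm
  have hb : (0:ℝ) < 1/441 * (24/25:ℝ)^m := by positivity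
  rcases le_or_gt m 217 with h | h
  · have h2 : (2:ℝ) ≤ (m:ℝ) := by
      have : 2 ≤ m := by omega
      exact_mod_cast this
    have h217 : (m:ℝ) ≤ 217 := by exact_mod_cast h
    have hco : (0:ℝ) ≤ 218*(m:ℝ) - (m:ℝ)^2 - 1 := by nlinarith
    have : (0:ℝ) ≤ dd m := by
      rw [hdd]
      have := (ratio_pos m).le
      positivity
    linarith
  · have h218 : 218 ≤ m := by omega
    have h218' : (218:ℝ) ≤ (m:ℝ) := by exact_mod_cast h218
    have hx : (0:ℝ) < (400/441:ℝ)^m := by positivity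
    have hr1 := ratio_le_one m
    have hr0 := (ratio_pos m).le
    have hco : (0:ℝ) ≤ (m:ℝ)^2 - 218*(m:ℝ) + 1 := by nlinarith
    have hco2 : (m:ℝ)^2 - 218*(m:ℝ) + 1 ≤ (m:ℝ)^2 := by nlinarith
    have key := tail_term m h218
    rw [hdd]
    have h1 : ((m:ℝ)^2 - 218*(m:ℝ) + 1) * ((poch (1/2) m / m.factorial) * (400/441)^m)
        ≤ (m:ℝ)^2 * (400/441)^m := by
      have e1 : (poch (1/2) m / m.factorial) * (400/441)^m ≤ (400/441)^m :=
        mul_le_of_le_one_left hx.le hr1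
      nlinarith [mul_le_mul hco2 e1 (by positivity) (by nlinarith)]
    nlinarith [h1, key]

lemma dd01 : dd 0 = -1/441 ∧ dd 1 = 43200/194481 := by
  have hp1 : poch (1/2) 1 = 1/2 := by
    rw [show poch (1/2) 1 = poch (1/2) (0 + 1) from rfl, poch_succ', poch_zero']; norm_num
  constructor
  · rw [hdd, poch_zero']; norm_num
  · rw [hdd, hp1]; norm_num [Nat.factorial]

lemma tsum_dd_pos : 0 < ∑' n, dd n := by
  have hsplit := Summable.sum_add_tsum_nat_add 2 summable_dd
  have hgeo : Summable (fun n : ℕ => (24/25:ℝ)^n) :=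
    summable_geometric_of_lt_one (by norm_num) (by norm_num)
  have hbS : Summable (fun n : ℕ => -(1/441 * (24/25:ℝ)^(n+2))) := by
    have h1 : Summable (fun n : ℕ => (-(1/441 * (24/25:ℝ)^2)) * (24/25:ℝ)^n) :=
      hgeo.mul_left _
    refine h1.congr fun n => ?_
    rw [pow_add]; ring
  have hddS : Summable (fun n : ℕ => dd (n + 2)) :=
    (summable_nat_add_iff 2).mpr summable_dd
  have hle : ∑' n : ℕ, -(1/441 * (24/25:ℝ)^(n+2)) ≤ ∑' n : ℕ, dd (n+2) :=
    Summable.tsum_le_tsum dd_tail_bound hbS hddS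
  have hval : ∑' n : ℕ, -(1/441 * (24/25:ℝ)^(n+2)) = -(576/11025 : ℝ) := by
    have e : ∀ n : ℕ, -(1/441 * (24/25:ℝ)^(n+2)) = (-(1/441 * (24/25:ℝ)^2)) * (24/25:ℝ)^n := by
      intro n; rw [pow_add]; ring
    rw [tsum_congr e, tsum_mul_left, tsum_geometric_of_lt_one (by norm_num) (by norm_num)]
    norm_num
  have hfin : ∑ i ∈ Finset.range 2, dd i = -1/441 + 43200/194481 := by
    rw [Finset.sum_range_succ, Finset.sum_range_one, dd01.1, dd01.2]
  rw [← hsplit, hfin]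
  rw [hval] at hle
  norm_num at hle ⊢
  linarith

/-- For `α = 2`, `r = 21/10` the zero-in-bidisk criterion holds. -/
theorem stmt19 :
    40 / 21 * F32 2 3 (3 / 2) 2 2 (400 / 441) >
      F32 2 2 (1 / 2) 1 1 (400 / 441) +
        400 / 441 * F32 3 3 (3 / 2) 2 3 (400 / 441) := by
  have hA : F32 2 3 (3 / 2) 2 2 (400 / 441) = ∑' n, fA n := rfl
  have hB : F32 2 2 (1 / 2) 1 1 (400 / 441) = ∑' n, fB n := rfl
  have hC : F32 3 3 (3 / 2) 2 3 (400 / 441) = ∑' n, fC n := rfl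
  have hCA : ∑' n, fC n = ∑' n, fA n := tsum_congr hfC
  have hsub : ∑' n, dd n = 440/441 * (∑' n, fA n) - ∑' n, fB n := by
    calc ∑' n, dd n = ∑' n, (440/441 * fA n - fB n) := rfl
      _ = (∑' n, 440/441 * fA n) - ∑' n, fB n :=
          Summable.tsum_sub (summable_fA.mul_left _) summable_fB
      _ = 440/441 * (∑' n, fA n) - ∑' n, fB n := by rw [tsum_mul_left]
  have hpos := tsum_dd_pos
  rw [hA, hB, hC, hCA]
  linarith [hpos, hsub]
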